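/- arXiv:2204.13536 — 3 statements merged into one kernel-verified Lean document; each statement's English description precedes it below -/
import Mathlib

section
/- Fix integers N > K ≥ 1. The function f(α) = (Σ_{i=1}^K i^{-α}) / (Σ_{j=1}^N j^{-α}) is strictly monotonically increasing in α on [0, ∞). -/
private lemma key_cross (i j : ℕ) (hi : 1 ≤ i) (hij : i < j) {α β : ℝ} (hαβ : α < β) :
    (i : ℝ) ^ (-α) * (j : ℝ) ^ (-β) < (i : ℝ) ^ (-β) * (j : ℝ) ^ (-α) := by
  have hi' : (0 : ℝ) < i := by exact_mod_cast hi
  have hj' : (0 : ℝ) < j := lt_trans hi' (by exact_mod_cast hij)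
  have h1 : (i : ℝ) ^ (β - α) < (j : ℝ) ^ (β - α) :=
    Real.rpow_lt_rpow (le_of_lt hi') (by exact_mod_cast hij) (by linarith)
  have h2 : 0 < (i : ℝ) ^ (-β) := Real.rpow_pos_of_pos hi' _
  have h3 : 0 < (j : ℝ) ^ (-β) := Real.rpow_pos_of_pos hj' _
  have e1 : (i : ℝ) ^ (-α) = (i : ℝ) ^ (β - α) * (i : ℝ) ^ (-β) := by
    rw [← Real.rpow_add hi']; ring_nf
  have e2 : (j : ℝ) ^ (-α) = (j : ℝ) ^ (β - α) * (j : ℝ) ^ (-β) := by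
    rw [← Real.rpow_add hj']; ring_nf
  rw [e1, e2]
  nlinarith [mul_lt_mul_of_pos_left h1 (mul_pos h2 h3)]

theorem stmt_5 (N K : ℕ) (hK : 1 ≤ K) (hKN : K < N) :
    StrictMonoOn
      (fun α : ℝ =>
        (∑ i ∈ Finset.Icc 1 K, (i : ℝ) ^ (-α)) / (∑ j ∈ Finset.Icc 1 N, (j : ℝ) ^ (-α)))
      (Set.Ici (0 : ℝ)) := by
  intro α hα β hβ hαβ
  have hsplit : ∀ γ : ℝ, (∑ j ∈ Finset.Icc 1 N, (j : ℝ) ^ (-γ)) =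
      (∑ i ∈ Finset.Icc 1 K, (i : ℝ) ^ (-γ)) + ∑ j ∈ Finset.Ioc K N, (j : ℝ) ^ (-γ) := by
    intro γ
    have h1 : ∀ n : ℕ, Finset.Icc 1 n = Finset.Ioc 0 n := fun n => by
      rw [← Finset.Icc_add_one_left_eq_Ioc]; rfl
    rw [h1, h1, ← Finset.sum_Ioc_consecutive _ (Nat.zero_le K) (le_of_lt hKN)]
  have hSKpos : ∀ γ : ℝ, 0 < ∑ i ∈ Finset.Icc 1 K, (i : ℝ) ^ (-γ) := by
    intro γ
    apply Finset.sum_pos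
    · intro i hi
      have : 1 ≤ i := (Finset.mem_Icc.1 hi).1
      exact Real.rpow_pos_of_pos (by exact_mod_cast this) _
    · exact ⟨1, Finset.mem_Icc.2 ⟨le_refl 1, hK⟩⟩
  have hTpos : ∀ γ : ℝ, 0 < ∑ j ∈ Finset.Ioc K N, (j : ℝ) ^ (-γ) := by
    intro γ
    apply Finset.sum_pos
    · intro j hj
      have : K < j := (Finset.mem_Ioc.1 hj).1
      have : 1 ≤ j := le_trans hK (le_of_lt this)
      exact Real.rpow_pos_of_pos (by exact_mod_cast this) _
    · exact ⟨N, Finset.mem_Ioc.2 ⟨hKN, le_refl N⟩⟩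
  have hSNposα : 0 < ∑ j ∈ Finset.Icc 1 N, (j : ℝ) ^ (-α) := by
    rw [hsplit α]; exact add_pos (hSKpos α) (hTpos α)
  have hSNposβ : 0 < ∑ j ∈ Finset.Icc 1 N, (j : ℝ) ^ (-β) := by
    rw [hsplit β]; exact add_pos (hSKpos β) (hTpos β)
  simp only [Set.mem_Ici] at hα hβ
  rw [div_lt_div_iff₀ hSNposα hSNposβ, hsplit α, hsplit β]
  have key2 : (∑ i ∈ Finset.Icc 1 K, (i : ℝ) ^ (-α)) * (∑ j ∈ Finset.Ioc K N, (j : ℝ) ^ (-β))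
      < (∑ i ∈ Finset.Icc 1 K, (i : ℝ) ^ (-β)) * (∑ j ∈ Finset.Ioc K N, (j : ℝ) ^ (-α)) := by
    rw [Finset.sum_mul_sum, Finset.sum_mul_sum]
    apply Finset.sum_lt_sum_of_nonempty ⟨1, Finset.mem_Icc.2 ⟨le_refl 1, hK⟩⟩
    intro i hi
    apply Finset.sum_lt_sum_of_nonempty ⟨N, Finset.mem_Ioc.2 ⟨hKN, le_refl N⟩⟩
    intro j hj
    exact key_cross i j (Finset.mem_Icc.1 hi).1
      (lt_of_le_of_lt (Finset.mem_Icc.1 hi).2 (Finset.mem_Ioc.1 hj).1) hαβ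
  nlinarith [key2]
end

section
/- Fix N ≥ 2 and K ≥ 1. Define s_i(α) = (Σ_{j=1}^i (N-j+1)^{-α}) / (Σ_{j=1}^N j^{-α}) for 1 ≤ i ≤ N-1, and the average quality q̄(α) = N - Σ_{i=1}^{N-1} s_i(α)^K. Then q̄ is strictly increasing in α ≥ 0. -/
private lemma stmt6_num_pos (N i : ℕ) (hi1 : 1 ≤ i) (γ : ℝ) :
    0 < ∑ j ∈ Finset.Icc 1 i, ((N - j + 1 : ℕ) : ℝ) ^ (-γ) := by
  refine Finset.sum_pos (fun j hj => ?_) (Finset.nonempty_Icc.2 hi1)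
  exact Real.rpow_pos_of_pos (by exact_mod_cast Nat.succ_le_of_lt (by omega) : (0:ℝ) < ((N - j + 1 : ℕ) : ℝ)) _

private lemma stmt6_den_pos (N : ℕ) (hN : 2 ≤ N) (γ : ℝ) :
    0 < ∑ j ∈ Finset.Icc 1 N, (j : ℝ) ^ (-γ) := by
  refine Finset.sum_pos (fun j hj => ?_) (Finset.nonempty_Icc.2 (by omega))
  rw [Finset.mem_Icc] at hj
  exact Real.rpow_pos_of_pos (by exact_mod_cast hj.1) _

private lemma stmt6_den_eq (N : ℕ) (γ : ℝ) :
    ∑ j ∈ Finset.Icc 1 N, (j : ℝ) ^ (-γ)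
      = ∑ j ∈ Finset.Icc 1 N, ((N - j + 1 : ℕ) : ℝ) ^ (-γ) := by
  refine Finset.sum_nbij' (fun j => N - j + 1) (fun j => N - j + 1) ?_ ?_ ?_ ?_ ?_
  · intro j hj; simp only [Finset.mem_Icc] at *; omega
  · intro j hj; simp only [Finset.mem_Icc] at *; omega
  · intro j hj; simp only [Finset.mem_Icc] at hj; omega
  · intro j hj; simp only [Finset.mem_Icc] at hj; omega
  · intro j hj; simp only [Finset.mem_Icc] at hj
    congr 2; omega

private lemma stmt6_anti (N i : ℕ) (hN : 2 ≤ N) (hi1 : 1 ≤ i) (hi2 : i ≤ N - 1)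
    (α β : ℝ) (hab : α < β) :
    (∑ j ∈ Finset.Icc 1 i, ((N - j + 1 : ℕ) : ℝ) ^ (-β)) /
        (∑ j ∈ Finset.Icc 1 N, (j : ℝ) ^ (-β))
      < (∑ j ∈ Finset.Icc 1 i, ((N - j + 1 : ℕ) : ℝ) ^ (-α)) /
        (∑ j ∈ Finset.Icc 1 N, (j : ℝ) ^ (-α)) := by
  have hiN : i ≤ N := by omega
  have hsplit : ∀ γ : ℝ, ∑ j ∈ Finset.Icc 1 N, (j : ℝ) ^ (-γ)
      = (∑ j ∈ Finset.Icc 1 i, ((N - j + 1 : ℕ) : ℝ) ^ (-γ))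
        + ∑ j ∈ Finset.Ioc i N, ((N - j + 1 : ℕ) : ℝ) ^ (-γ) := by
    intro γ
    rw [stmt6_den_eq N γ, show Finset.Icc 1 N = Finset.Ioc 0 N from Finset.Icc_add_one_left_eq_Ioc 0 N,
      show Finset.Icc 1 i = Finset.Ioc 0 i from Finset.Icc_add_one_left_eq_Ioc 0 i,
      ← Finset.sum_Ioc_consecutive _ (Nat.zero_le i) hiN]
  set F := fun γ : ℝ => ∑ j ∈ Finset.Icc 1 i, ((N - j + 1 : ℕ) : ℝ) ^ (-γ) with hF
  set G := fun γ : ℝ => ∑ j ∈ Finset.Ioc i N, ((N - j + 1 : ℕ) : ℝ) ^ (-γ) with hG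
  have hFpos : ∀ γ, 0 < F γ := fun γ => stmt6_num_pos N i hi1 γ
  have hGpos : ∀ γ, 0 < G γ := by
    intro γ
    refine Finset.sum_pos (fun j hj => ?_) (Finset.nonempty_Ioc.2 (by omega))
    exact Real.rpow_pos_of_pos (by exact_mod_cast Nat.succ_le_of_lt (by omega) : (0:ℝ) < ((N - j + 1 : ℕ) : ℝ)) _
  -- key cross inequality
  have hkey : F β * G α < F α * G β := by
    rw [Finset.sum_mul_sum, Finset.sum_mul_sum]
    refine Finset.sum_lt_sum_of_nonempty (Finset.nonempty_Icc.2 hi1) (fun j hj => ?_)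
    refine Finset.sum_lt_sum_of_nonempty (Finset.nonempty_Ioc.2 (by omega)) (fun j' hj' => ?_)
    rw [Finset.mem_Icc] at hj
    rw [Finset.mem_Ioc] at hj'
    set a : ℝ := ((N - j + 1 : ℕ) : ℝ) with ha
    set b : ℝ := ((N - j' + 1 : ℕ) : ℝ) with hb
    have hbpos : (0:ℝ) < b := by
      rw [hb]; exact_mod_cast Nat.succ_le_of_lt (by omega)
    have hba : b < a := by
      rw [ha, hb]; exact_mod_cast (by omega : N - j' + 1 < N - j + 1)
    have hapos : (0:ℝ) < a := lt_trans hbpos hba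
    have h1 : b ^ (β - α) < a ^ (β - α) :=
      Real.rpow_lt_rpow hbpos.le hba (by linarith)
    have h2 : a ^ (-α) = a ^ (-β) * a ^ (β - α) := by
      rw [← Real.rpow_add hapos, show -β + (β - α) = -α by ring]
    have h3 : b ^ (-α) = b ^ (-β) * b ^ (β - α) := by
      rw [← Real.rpow_add hbpos, show -β + (β - α) = -α by ring]
    rw [h2, h3]
    have hA : 0 < a ^ (-β) := Real.rpow_pos_of_pos hapos _
    have hB : 0 < b ^ (-β) := Real.rpow_pos_of_pos hbpos _
    nlinarith [mul_lt_mul_of_pos_left h1 (mul_pos hA hB)]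
  rw [hsplit α, hsplit β, div_lt_div_iff₀ (by linarith [hFpos β, hGpos β]) (by linarith [hFpos α, hGpos α])]
  nlinarith [hkey]

theorem stmt_6 (N K : ℕ) (hN : 2 ≤ N) (hK : 1 ≤ K)
    (s : ℕ → ℝ → ℝ)
    (hs : ∀ i α, s i α =
      (∑ j ∈ Finset.Icc 1 i, ((N - j + 1 : ℕ) : ℝ) ^ (-α)) /
        (∑ j ∈ Finset.Icc 1 N, (j : ℝ) ^ (-α))) :
    StrictMonoOn
      (fun α : ℝ => (N : ℝ) - ∑ i ∈ Finset.Icc 1 (N - 1), (s i α) ^ K)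
      (Set.Ici (0 : ℝ)) := by
  intro α hα β hβ hab
  dsimp only
  apply sub_lt_sub_left
  refine Finset.sum_lt_sum_of_nonempty (Finset.nonempty_Icc.2 (by omega)) (fun i hi => ?_)
  rw [Finset.mem_Icc] at hi
  have hlt : s i β < s i α := by
    rw [hs i α, hs i β]
    exact stmt6_anti N i hN hi.1 hi.2 α β hab
  have hposβ : 0 < s i β := by
    rw [hs i β]
    exact div_pos (stmt6_num_pos N i hi.1 β) (stmt6_den_pos N hN β)
  exact pow_lt_pow_left₀ hlt hposβ.le (by omega)
end

section
/- Let N ≥ K ≥ 2 and let items win i.i.d. rounds with strictly increasing positive probabilities b_K < b_{K+1} < ... < b_N (and b_i = 0 for i < K). Let E_n be the event that the win counts after n rounds satisfy w_K[n] < w_{K+1}[n] < ... < w_N[n]. Then P(E_n fails) ≤ (N-1)·[exp(-n·b_min·H(√r_min)) + exp(-n·b_min·H(1/√r_min))], where b_min = min_i b_i, r_min = min_i b_{i+1}/b_i > 1, and H(a) = 1 - a + a log a. Consequently P(lim inf E_n) = 1. -/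
open MeasureTheory ProbabilityTheory Filter Real

lemma my_key_log {x y : ℝ} (hx : 0 < x) (hy : 0 < y) : x - y ≤ x * Real.log (x / y) := by
  have h := Real.log_le_sub_one_of_pos (div_pos hy hx)
  have hlog : Real.log (x / y) = - Real.log (y / x) := by
    rw [← Real.log_inv]; congr 1; field_simp
  rw [hlog]
  have := mul_le_mul_of_nonneg_left h hx.le
  rw [mul_sub, mul_div_cancel₀ _ hx.ne'] at this
  nlinarith

lemma myH_nonneg {a : ℝ} (ha : 0 < a) : 0 ≤ 1 - a + a * Real.log a := by
  have := my_key_log ha one_pos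
  simp only [div_one] at this
  linarith

lemma myH_pos {a : ℝ} (ha : 0 < a) (ha1 : a ≠ 1) : 0 < 1 - a + a * Real.log a := by
  have h := Real.log_lt_sub_one_of_pos (inv_pos.2 ha) (fun h => ha1 (inv_eq_one.mp h))
  rw [Real.log_inv] at h
  have := mul_lt_mul_of_pos_left h ha
  rw [mul_sub, mul_inv_cancel₀ ha.ne'] at this
  nlinarith

lemma myH_mono {x y : ℝ} (h1 : 1 ≤ y) (hyx : y ≤ x) :
    1 - y + y * Real.log y ≤ 1 - x + x * Real.log x := by
  have hy : 0 < y := lt_of_lt_of_le one_pos h1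
  have hx : 0 < x := lt_of_lt_of_le hy hyx
  have key : x - y ≤ x * Real.log (x / y) := my_key_log hx hy
  rw [Real.log_div hx.ne' hy.ne', mul_sub] at key
  have hlogy : 0 ≤ Real.log y := Real.log_nonneg h1
  nlinarith [mul_le_mul_of_nonneg_right hyx hlogy]

lemma myH_anti {x y : ℝ} (hx : 0 < x) (hxy : x ≤ y) (hy1 : y ≤ 1) :
    1 - y + y * Real.log y ≤ 1 - x + x * Real.log x := by
  have hy : 0 < y := lt_of_lt_of_le hx hxy
  have key : x - y ≤ x * Real.log (x / y) := my_key_log hx hy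
  rw [Real.log_div hx.ne' hy.ne', mul_sub] at key
  have hlogy : Real.log y ≤ 0 := Real.log_nonpos hy.le hy1
  nlinarith [mul_le_mul_of_nonneg_left (neg_nonneg.2 hlogy) (sub_nonneg.2 hxy)]

lemma my_binom_chernoff {Ω : Type*} [MeasurableSpace Ω] {μ : Measure Ω} [IsProbabilityMeasure μ]
    {X : ℕ → Ω → ℕ} (hmeas : ∀ n, Measurable (X n))
    (hindep : iIndepFun X μ)
    (i : ℕ) {p : ℝ} (hdist : ∀ m, (μ {ω | X m ω = i}).toReal = p) (hp : 0 < p)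
    (n : ℕ) {s : ℝ} (hs : 0 < s) :
    (p ≤ s → (μ {ω | (n:ℝ) * s ≤ (((Finset.range n).filter (fun m => X m ω = i)).card : ℝ)}).toReal
        ≤ Real.exp (-(n:ℝ) * (p * (1 - s/p + (s/p) * Real.log (s/p))))) ∧
    (s ≤ p → (μ {ω | (((Finset.range n).filter (fun m => X m ω = i)).card : ℝ) ≤ (n:ℝ) * s}).toReal
        ≤ Real.exp (-(n:ℝ) * (p * (1 - s/p + (s/p) * Real.log (s/p))))) := by
  classical
  set g : ℕ → ℝ := fun k => if k = i then 1 else 0 with hg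
  have hgm : Measurable g := measurable_from_top
  set Y : ℕ → Ω → ℝ := fun m => g ∘ X m with hY
  set S : Ω → ℝ := fun ω => ∑ m ∈ Finset.range n, Y m ω with hSdef
  have hYm : ∀ m, Measurable (Y m) := fun m => hgm.comp (hmeas m)
  have hSm : Measurable S := Finset.measurable_sum _ (fun m _ => hYm m)
  have hScard : ∀ ω, (((Finset.range n).filter (fun m => X m ω = i)).card : ℝ) = S ω := by
    intro ω
    rw [Finset.card_filter]
    push_cast
    simp only [hSdef, hY, hg, Function.comp]
  have hp1 : p ≤ 1 := by
    rw [← hdist 0]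
    exact ENNReal.toReal_le_of_le_ofReal one_pos.le (by simpa using prob_le_one)
  -- mgf of each Bernoulli
  have hmgfY : ∀ t m, mgf (Y m) μ t = 1 + p * (Real.exp t - 1) := by
    intro t m
    have hA : MeasurableSet {ω | X m ω = i} := (hmeas m) (measurableSet_singleton i)
    have heq : (fun ω => Real.exp (t * Y m ω))
        = fun ω => Set.indicator {ω | X m ω = i} (fun _ => Real.exp t - 1) ω + 1 := by
      funext ω
      by_cases h : X m ω = i
      · simp [hY, hg, Function.comp, h, Set.indicator_of_mem (by exact h : ω ∈ {ω | X m ω = i})]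
      · simp [hY, hg, Function.comp, h, Set.indicator_of_notMem (by exact h : ω ∉ {ω | X m ω = i})]
    rw [mgf, heq, integral_add ((integrable_const _).indicator hA) (integrable_const 1),
      integral_indicator_const _ hA, integral_const]
    simp [hdist m]
    simp only [measureReal_def, hdist m]
    ring
  have hindepY : iIndepFun Y μ :=
    hindep.comp (fun _ => g) (fun _ => hgm)
  have hSeq : S = ∑ m ∈ Finset.range n, Y m := by
    funext ω; simp [hSdef, Finset.sum_apply]
  have hmgfS : ∀ t, mgf S μ t = (1 + p * (Real.exp t - 1)) ^ n := by
    intro t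
    rw [hSeq, hindepY.mgf_sum hYm (Finset.range n)]
    rw [Finset.prod_congr rfl (fun m _ => hmgfY t m), Finset.prod_const, Finset.card_range]
  have hbase : ∀ t : ℝ, 0 ≤ 1 + p * (Real.exp t - 1) := by
    intro t
    nlinarith [Real.exp_pos t, hp.le]
  have hmgfS_le : ∀ t : ℝ, mgf S μ t ≤ Real.exp ((n:ℝ) * (p * (Real.exp t - 1))) := by
    intro t
    rw [hmgfS, Real.exp_nat_mul]
    refine pow_le_pow_left₀ (hbase t) ?_ n
    have := Real.add_one_le_exp (p * (Real.exp t - 1))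
    linarith
  have hSnonneg : ∀ ω, 0 ≤ S ω :=
    fun ω => Finset.sum_nonneg fun m _ => by simp only [hY, hg, Function.comp]; positivity
  have hSle : ∀ ω, S ω ≤ n := by
    intro ω
    calc S ω ≤ ∑ m ∈ Finset.range n, 1 := Finset.sum_le_sum (fun m _ => by
            simp only [hY, hg, Function.comp]; split <;> norm_num)
    _ = n := by simp
  have hint : ∀ t : ℝ, Integrable (fun ω => Real.exp (t * S ω)) μ := by
    intro t
    refine (integrable_const (Real.exp (|t| * n))).mono'
      ((hSm.const_mul t).exp.aestronglyMeasurable) (ae_of_all _ fun ω => ?_)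
    rw [Real.norm_eq_abs, Real.abs_exp]
    refine Real.exp_le_exp.2 (le_trans (le_abs_self _) ?_)
    rw [abs_mul, abs_of_nonneg (hSnonneg ω)]
    exact mul_le_mul_of_nonneg_left (hSle ω) (abs_nonneg t)
  -- exponent algebra with t = log (s/p)
  set t : ℝ := Real.log (s / p) with ht
  have hexpt : Real.exp t = s / p := Real.exp_log (div_pos hs hp)
  have halg : Real.exp (-t * ((n:ℝ) * s)) * Real.exp ((n:ℝ) * (p * (Real.exp t - 1)))
      = Real.exp (-(n:ℝ) * (p * (1 - s/p + (s/p) * Real.log (s/p)))) := by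
    rw [← Real.exp_add, hexpt]
    congr 1
    have : p * (s / p) = s := by field_simp
    ring_nf
    field_simp
    ring
  constructor
  · intro hps
    have htn : 0 ≤ t := Real.log_nonneg ((one_le_div hp).2 hps)
    have hset : {ω | (n:ℝ) * s ≤ (((Finset.range n).filter (fun m => X m ω = i)).card : ℝ)}
        = {ω | (n:ℝ) * s ≤ S ω} := by ext ω; simp [hScard ω]
    rw [hset]
    calc (μ {ω | (n:ℝ) * s ≤ S ω}).toReal
        ≤ Real.exp (-t * ((n:ℝ) * s)) * mgf S μ t :=
          measure_ge_le_exp_mul_mgf ((n:ℝ) * s) htn (hint t)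
      _ ≤ Real.exp (-t * ((n:ℝ) * s)) * Real.exp ((n:ℝ) * (p * (Real.exp t - 1))) := by
          exact mul_le_mul_of_nonneg_left (hmgfS_le t) (Real.exp_pos _).le
      _ = _ := halg
  · intro hsp
    have htn : t ≤ 0 := Real.log_nonpos (div_nonneg hs.le hp.le) ((div_le_one hp).2 hsp)
    have hset : {ω | (((Finset.range n).filter (fun m => X m ω = i)).card : ℝ) ≤ (n:ℝ) * s}
        = {ω | S ω ≤ (n:ℝ) * s} := by ext ω; simp [hScard ω]
    rw [hset]
    calc (μ {ω | S ω ≤ (n:ℝ) * s}).toReal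
        ≤ Real.exp (-t * ((n:ℝ) * s)) * mgf S μ t :=
          measure_le_le_exp_mul_mgf ((n:ℝ) * s) htn (hint t)
      _ ≤ Real.exp (-t * ((n:ℝ) * s)) * Real.exp ((n:ℝ) * (p * (Real.exp t - 1))) := by
          exact mul_le_mul_of_nonneg_left (hmgfS_le t) (Real.exp_pos _).le
      _ = _ := halg

set_option maxHeartbeats 1000000 in
theorem stmt_16 {Ω : Type*} [MeasurableSpace Ω] (μ : Measure Ω) [IsProbabilityMeasure μ]
    (N K : ℕ) (hK : 2 ≤ K) (hKN : K ≤ N) (hKN' : K < N)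
    (b : ℕ → ℝ)
    (hpos : ∀ i, K ≤ i → i ≤ N → 0 < b i)
    (hzero : ∀ i, i < K → b i = 0)
    (hinc : ∀ i, K ≤ i → i < N → b i < b (i + 1))
    (X : ℕ → Ω → ℕ) (hmeas : ∀ n, Measurable (X n))
    (hindep : iIndepFun X μ)
    (hdist : ∀ n i, (μ {ω | X n ω = i}).toReal = b i)
    (w : ℕ → ℕ → Ω → ℕ)
    (hw : ∀ i n ω, w i n ω = ((Finset.range n).filter (fun m => X m ω = i)).card)
    (E : ℕ → Set Ω)
    (hE : ∀ n, E n = {ω | ∀ i, K ≤ i → i < N → w i n ω < w (i + 1) n ω})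
    (H : ℝ → ℝ) (hH : ∀ a : ℝ, H a = 1 - a + a * Real.log a)
    (bmin rmin : ℝ)
    (hbmin : bmin = (Finset.Icc K N).inf' (Finset.nonempty_Icc.mpr hKN) b)
    (hrmin : rmin = (Finset.Icc K (N - 1)).inf'
      (Finset.nonempty_Icc.mpr (Nat.le_sub_one_of_lt hKN')) (fun i => b (i + 1) / b i))
    (hrmin1 : 1 < rmin) :
    (∀ n : ℕ,
        (μ (E n)ᶜ).toReal ≤
          ((N : ℝ) - 1) *
            (Real.exp (-(n : ℝ) * bmin * H (Real.sqrt rmin)) +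
              Real.exp (-(n : ℝ) * bmin * H (Real.sqrt rmin⁻¹)))) ∧
    μ (Filter.liminf E Filter.atTop) = 1 := by
  classical
  have hbminpos : 0 < bmin := by
    rw [hbmin, Finset.lt_inf'_iff]
    intro i hi
    rw [Finset.mem_Icc] at hi
    exact hpos i hi.1 hi.2
  have hbmin_le : ∀ i, K ≤ i → i ≤ N → bmin ≤ b i := fun i h1 h2 => by
    rw [hbmin]; exact Finset.inf'_le _ (Finset.mem_Icc.2 ⟨h1, h2⟩)
  have hrmin_le : ∀ i, K ≤ i → i < N → rmin ≤ b (i+1) / b i := fun i h1 h2 => by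
    rw [hrmin]
    exact Finset.inf'_le (fun i => b (i + 1) / b i) (Finset.mem_Icc.2 ⟨h1, Nat.le_sub_one_of_lt h2⟩)
  have hrminpos : 0 < rmin := lt_trans one_pos hrmin1
  have hsq1 : 1 < Real.sqrt rmin := by
    rw [show (1:ℝ) = Real.sqrt 1 by simp]
    exact Real.sqrt_lt_sqrt one_pos.le hrmin1
  have hsq2pos : 0 < Real.sqrt rmin⁻¹ := Real.sqrt_pos.2 (inv_pos.2 hrminpos)
  have hrmininv : rmin⁻¹ < 1 := by
    rw [inv_lt_one_iff₀]; right; exact hrmin1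
  have hsq2lt : Real.sqrt rmin⁻¹ < 1 := by
    rw [show (1:ℝ) = Real.sqrt 1 by simp]
    exact Real.sqrt_lt_sqrt (inv_pos.2 hrminpos).le hrmininv
  have hH1pos : 0 < H (Real.sqrt rmin) := by
    rw [hH]; exact myH_pos (lt_trans one_pos hsq1) (ne_of_gt hsq1)
  have hH2pos : 0 < H (Real.sqrt rmin⁻¹) := by
    rw [hH]; exact myH_pos hsq2pos (ne_of_lt hsq2lt)
  -- Part 1
  have hbound : ∀ n : ℕ,
      (μ (E n)ᶜ).toReal ≤
        ((N : ℝ) - 1) *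
          (Real.exp (-(n : ℝ) * bmin * H (Real.sqrt rmin)) +
            Real.exp (-(n : ℝ) * bmin * H (Real.sqrt rmin⁻¹))) := by
    intro n
    set e1 := Real.exp (-(n : ℝ) * bmin * H (Real.sqrt rmin)) with he1
    set e2 := Real.exp (-(n : ℝ) * bmin * H (Real.sqrt rmin⁻¹)) with he2
    set sq : ℕ → ℝ := fun i => Real.sqrt (b i * b (i+1)) with hsq
    set U : ℕ → Set Ω := fun i =>
      {ω | (n:ℝ) * sq i ≤ (((Finset.range n).filter (fun m => X m ω = i)).card : ℝ)} with hU
    set L : ℕ → Set Ω := fun i =>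
      {ω | (((Finset.range n).filter (fun m => X m ω = (i+1))).card : ℝ) ≤ (n:ℝ) * sq i} with hL
    have hsub : (E n)ᶜ ⊆ ⋃ i ∈ Finset.Ico K N, (U i ∪ L i) := by
      intro ω hω
      rw [hE n] at hω
      simp only [Set.mem_compl_iff, Set.mem_setOf_eq] at hω
      push_neg at hω
      obtain ⟨i, hKi, hiN, hge⟩ := hω
      refine Set.mem_biUnion (Finset.mem_Ico.2 ⟨hKi, hiN⟩) ?_
      by_cases hcase : (n:ℝ) * sq i ≤ (w i n ω : ℝ)
      · left
        simp only [hU, Set.mem_setOf_eq]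
        rw [← hw i n ω]
        exact hcase
      · right
        simp only [hL, Set.mem_setOf_eq]
        rw [← hw (i+1) n ω]
        calc ((w (i+1) n ω : ℕ) : ℝ) ≤ (w i n ω : ℝ) := Nat.cast_le.2 hge
        _ ≤ (n:ℝ) * sq i := le_of_not_ge hcase
    have hper : ∀ i, K ≤ i → i < N → (μ (U i)).toReal ≤ e1 ∧ (μ (L i)).toReal ≤ e2 := by
      intro i hKi hiN
      have hbi : 0 < b i := hpos i hKi hiN.le
      have hbi1 : 0 < b (i+1) := hpos (i+1) (le_trans hKi (Nat.le_succ i)) hiN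
      have hsqpos : 0 < sq i := Real.sqrt_pos.2 (mul_pos hbi hbi1)
      have hbilt : b i < b (i+1) := hinc i hKi hiN
      have hri : rmin ≤ b (i+1) / b i := hrmin_le i hKi hiN
      have hripos : 0 < b (i+1) / b i := div_pos hbi1 hbi
      have h1 : b i ≤ sq i := by
        calc b i = Real.sqrt (b i * b i) := (Real.sqrt_mul_self hbi.le).symm
        _ ≤ sq i := Real.sqrt_le_sqrt (by nlinarith)
      have h2 : sq i ≤ b (i+1) := by
        calc sq i ≤ Real.sqrt (b (i+1) * b (i+1)) := Real.sqrt_le_sqrt (by nlinarith)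
        _ = b (i+1) := Real.sqrt_mul_self hbi1.le
      have hratio1 : sq i / b i = Real.sqrt (b (i+1) / b i) := by
        rw [hsq]
        simp only
        rw [show b i * b (i+1) = (b (i+1) / b i) * (b i)^2 by field_simp,
          Real.sqrt_mul hripos.le, Real.sqrt_sq hbi.le]
        field_simp
      have hratio2 : sq i / b (i+1) = Real.sqrt ((b (i+1) / b i)⁻¹) := by
        rw [hsq]
        simp only
        rw [show b i * b (i+1) = ((b (i+1) / b i)⁻¹) * (b (i+1))^2 by field_simp,
          Real.sqrt_mul (by positivity), Real.sqrt_sq hbi1.le]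
        field_simp
      -- comparison of exponents (upper)
      have hcmp1 : -(n:ℝ) * (b i * (1 - sq i / b i + (sq i / b i) * Real.log (sq i / b i)))
          ≤ -(n:ℝ) * bmin * H (Real.sqrt rmin) := by
        rw [hratio1, hH, mul_assoc]
        have hm : bmin * (1 - Real.sqrt rmin + Real.sqrt rmin * Real.log (Real.sqrt rmin))
            ≤ b i * (1 - Real.sqrt (b (i+1) / b i)
              + Real.sqrt (b (i+1) / b i) * Real.log (Real.sqrt (b (i+1) / b i))) := by
          refine mul_le_mul (hbmin_le i hKi hiN.le)
            (myH_mono hsq1.le (Real.sqrt_le_sqrt hri)) (myH_nonneg (lt_trans one_pos hsq1))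
            hbi.le
        nlinarith [Nat.cast_nonneg (α := ℝ) n]
      have hcmp2 : -(n:ℝ) * (b (i+1) * (1 - sq i / b (i+1)
            + (sq i / b (i+1)) * Real.log (sq i / b (i+1))))
          ≤ -(n:ℝ) * bmin * H (Real.sqrt rmin⁻¹) := by
        rw [hratio2, hH, mul_assoc]
        have hinv : (b (i+1) / b i)⁻¹ ≤ rmin⁻¹ := by
          gcongr
        have hs0 : 0 < Real.sqrt ((b (i+1) / b i)⁻¹) := Real.sqrt_pos.2 (by positivity)
        have hm : bmin * (1 - Real.sqrt rmin⁻¹ + Real.sqrt rmin⁻¹ * Real.log (Real.sqrt rmin⁻¹))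
            ≤ b (i+1) * (1 - Real.sqrt ((b (i+1) / b i)⁻¹)
              + Real.sqrt ((b (i+1) / b i)⁻¹) * Real.log (Real.sqrt ((b (i+1) / b i)⁻¹))) := by
          refine mul_le_mul (hbmin_le (i+1) (le_trans hKi (Nat.le_succ i)) hiN)
            (myH_anti hs0 (Real.sqrt_le_sqrt hinv) hsq2lt.le)
            (myH_nonneg hsq2pos) hbi1.le
        nlinarith [Nat.cast_nonneg (α := ℝ) n]
      constructor
      · have hch := (my_binom_chernoff hmeas hindep i (fun m => hdist m i) hbi n hsqpos).1 h1
        refine hch.trans ?_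
        rw [he1]
        exact Real.exp_le_exp.2 hcmp1
      · have hch := (my_binom_chernoff hmeas hindep (i+1) (fun m => hdist m (i+1)) hbi1 n
          hsqpos).2 h2
        refine hch.trans ?_
        rw [he2]
        exact Real.exp_le_exp.2 hcmp2
    have hmain : (μ (E n)ᶜ).toReal ≤
        ∑ i ∈ Finset.Ico K N, ((μ (U i)).toReal + (μ (L i)).toReal) := by
      have h1 : μ (E n)ᶜ ≤ ∑ i ∈ Finset.Ico K N, (μ (U i) + μ (L i)) :=
        (measure_mono hsub).trans ((measure_biUnion_finset_le _ _).trans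
          (Finset.sum_le_sum fun i _ => measure_union_le _ _))
      have hne : ∀ i ∈ Finset.Ico K N, μ (U i) + μ (L i) ≠ ⊤ :=
        fun i _ => ENNReal.add_ne_top.2 ⟨measure_ne_top _ _, measure_ne_top _ _⟩
      have h2 := ENNReal.toReal_mono (by
        rw [ne_eq, ENNReal.sum_eq_top]
        push_neg
        exact hne) h1
      rw [ENNReal.toReal_sum hne] at h2
      refine h2.trans (le_of_eq (Finset.sum_congr rfl fun i hi => ?_))
      rw [ENNReal.toReal_add (measure_ne_top _ _) (measure_ne_top _ _)]
    calc (μ (E n)ᶜ).toReal ≤ ∑ i ∈ Finset.Ico K N, ((μ (U i)).toReal + (μ (L i)).toReal) := hmain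
    _ ≤ ∑ _i ∈ Finset.Ico K N, (e1 + e2) := by
        refine Finset.sum_le_sum fun i hi => ?_
        rw [Finset.mem_Ico] at hi
        exact add_le_add (hper i hi.1 hi.2).1 (hper i hi.1 hi.2).2
    _ = ((N - K : ℕ) : ℝ) * (e1 + e2) := by
        rw [Finset.sum_const, Nat.card_Ico, nsmul_eq_mul]
    _ ≤ ((N:ℝ) - 1) * (e1 + e2) := by
        refine mul_le_mul_of_nonneg_right ?_ (by positivity)
        rw [Nat.cast_sub hKN]
        have : (2:ℝ) ≤ (K:ℝ) := by exact_mod_cast hK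
        linarith
  refine ⟨hbound, ?_⟩
  -- Part 2
  have hsum : (∑' nn : ℕ, μ (E nn)ᶜ) ≠ ⊤ := by
    set c1 := bmin * H (Real.sqrt rmin) with hc1def
    set c2 := bmin * H (Real.sqrt rmin⁻¹) with hc2def
    have hc1 : 0 < c1 := mul_pos hbminpos hH1pos
    have hc2 : 0 < c2 := mul_pos hbminpos hH2pos
    set f : ℕ → ℝ := fun nn => ((N:ℝ) - 1) * (Real.exp (-c1) ^ nn + Real.exp (-c2) ^ nn) with hf
    have hN1 : (0:ℝ) ≤ (N:ℝ) - 1 := by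
      have : (2:ℝ) ≤ (N:ℝ) := by exact_mod_cast le_trans hK hKN
      linarith
    have hfb : ∀ nn, μ (E nn)ᶜ ≤ ENNReal.ofReal (f nn) := by
      intro nn
      rw [← ENNReal.ofReal_toReal (measure_ne_top μ (E nn)ᶜ)]
      refine ENNReal.ofReal_le_ofReal ((hbound nn).trans (le_of_eq ?_))
      show ((N:ℝ) - 1) * (Real.exp (-(nn:ℝ) * bmin * H (Real.sqrt rmin))
          + Real.exp (-(nn:ℝ) * bmin * H (Real.sqrt rmin⁻¹)))
        = ((N:ℝ) - 1) * (Real.exp (-c1) ^ nn + Real.exp (-c2) ^ nn)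
      rw [← Real.exp_nat_mul, ← Real.exp_nat_mul]
      congr 1
      congr 1
      · congr 1; rw [hc1def]; ring
      · congr 1; rw [hc2def]; ring
    have hgeom : ∀ c : ℝ, 0 < c → Summable (fun nn : ℕ => Real.exp (-c) ^ nn) := by
      intro c hc
      refine summable_geometric_of_lt_one (Real.exp_pos _).le ?_
      calc Real.exp (-c) < Real.exp 0 := Real.exp_lt_exp.2 (by linarith)
      _ = 1 := Real.exp_zero
    have hfsumm : Summable f := by
      rw [hf]
      exact ((hgeom c1 hc1).add (hgeom c2 hc2)).mul_left _
    have hfnonneg : ∀ nn, 0 ≤ f nn := fun nn => by positivity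
    refine ne_top_of_le_ne_top ?_ (ENNReal.tsum_le_tsum hfb)
    rw [← ENNReal.ofReal_tsum_of_nonneg hfnonneg hfsumm]
    exact ENNReal.ofReal_ne_top
  have hlimsup : μ (Filter.limsup (fun nn => (E nn)ᶜ) Filter.atTop) = 0 :=
    MeasureTheory.measure_limsup_atTop_eq_zero hsum
  have hcompl : (Filter.liminf E Filter.atTop)ᶜ = Filter.limsup (fun nn => (E nn)ᶜ) Filter.atTop :=
    Filter.liminf_compl Filter.atTop E
  refine le_antisymm prob_le_one ?_
  calc (1:ENNReal) = μ Set.univ := measure_univ.symm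
  _ = μ ((Filter.liminf E Filter.atTop) ∪ (Filter.liminf E Filter.atTop)ᶜ) := by
      rw [Set.union_compl_self]
  _ ≤ μ (Filter.liminf E Filter.atTop) + μ (Filter.liminf E Filter.atTop)ᶜ :=
      measure_union_le _ _
  _ = μ (Filter.liminf E Filter.atTop) := by rw [hcompl, hlimsup, add_zero]
end
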